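/- There exists an instantaneous lossless source encoder with causal side information satisfying (1/n) E[L(X^n||Y^n)] ≤ (1/n) Σ_{i=1}^n (1 + H(X_i | X^{i-1}, Y^i)); in particular the expected rate exceeds the causally conditional entropy rate by at most 1 bit per symbol. -/

import Mathlib

open scoped Classical
open Real

noncomputable section

variable {α β : Type} [Fintype α] [DecidableEq α] [Fintype β] [DecidableEq β]

/-- Probability of the event `E` under the joint pmf `p` of `(X^n, Y^n)`. -/
def pr {n : ℕ} (p : (Fin n → α) → (Fin n → β) → ℝ)
    (E : (Fin n → α) → (Fin n → β) → Prop) : ℝ :=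
  ∑ x, ∑ y, if E x y then p x y else 0

/-- `p` is a probability mass function on pairs of sequences. -/
def IsPmf {n : ℕ} (p : (Fin n → α) → (Fin n → β) → ℝ) : Prop :=
  (∀ x y, 0 ≤ p x y) ∧ ∑ x, ∑ y, p x y = 1

/-- The conditional pmf `p(x_i | x^{i-1}, y^{i-d})` evaluated along `(x, y)`. -/
def condX {n : ℕ} (p : (Fin n → α) → (Fin n → β) → ℝ) (d : ℕ) (i : Fin n)
    (x : Fin n → α) (y : Fin n → β) : ℝ :=
  pr p (fun x' y' => (∀ j, j < i → x' j = x j) ∧ x' i = x i ∧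
      ∀ j : Fin n, (j : ℕ) + d ≤ (i : ℕ) → y' j = y j) /
  pr p (fun x' y' => (∀ j, j < i → x' j = x j) ∧
      ∀ j : Fin n, (j : ℕ) + d ≤ (i : ℕ) → y' j = y j)

/-- The conditional pmf `p(y_i | y^{i-1}, x^{i-d})` evaluated along `(x, y)`. -/
def condY {n : ℕ} (p : (Fin n → α) → (Fin n → β) → ℝ) (d : ℕ) (i : Fin n)
    (x : Fin n → α) (y : Fin n → β) : ℝ :=
  pr p (fun x' y' => (∀ j, j < i → y' j = y j) ∧ y' i = y i ∧
      ∀ j : Fin n, (j : ℕ) + d ≤ (i : ℕ) → x' j = x j) /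
  pr p (fun x' y' => (∀ j, j < i → y' j = y j) ∧
      ∀ j : Fin n, (j : ℕ) + d ≤ (i : ℕ) → x' j = x j)

/-- Causally conditioned pmf `p(x^n || y^{n-d}) = ∏ᵢ p(xᵢ | x^{i-1}, y^{i-d})`. -/
def ccX {n : ℕ} (p : (Fin n → α) → (Fin n → β) → ℝ) (d : ℕ)
    (x : Fin n → α) (y : Fin n → β) : ℝ :=
  ∏ i, condX p d i x y

/-- Causally conditioned pmf `p(y^n || x^{n-d}) = ∏ᵢ p(yᵢ | y^{i-1}, x^{i-d})`. -/
def ccY {n : ℕ} (p : (Fin n → α) → (Fin n → β) → ℝ) (d : ℕ)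
    (x : Fin n → α) (y : Fin n → β) : ℝ :=
  ∏ i, condY p d i x y

/-- Marginal pmf of `X^n`. -/
def pX {n : ℕ} (p : (Fin n → α) → (Fin n → β) → ℝ) (x : Fin n → α) : ℝ := ∑ y, p x y

/-- Marginal pmf of `Y^n`. -/
def pY {n : ℕ} (p : (Fin n → α) → (Fin n → β) → ℝ) (y : Fin n → β) : ℝ := ∑ x, p x y

/-- `H(X^n)` in bits. -/
def HX {n : ℕ} (p : (Fin n → α) → (Fin n → β) → ℝ) : ℝ :=
  -(∑ x, ∑ y, p x y * Real.logb 2 (pX p x))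

/-- `H(Y^n)` in bits. -/
def HY {n : ℕ} (p : (Fin n → α) → (Fin n → β) → ℝ) : ℝ :=
  -(∑ x, ∑ y, p x y * Real.logb 2 (pY p y))

/-- Joint entropy `H(X^n, Y^n)` in bits. -/
def Hjoint {n : ℕ} (p : (Fin n → α) → (Fin n → β) → ℝ) : ℝ :=
  -(∑ x, ∑ y, p x y * Real.logb 2 (p x y))

/-- Conditional entropy `H(X_i | X^{i-1}, Y^{i-d})` in bits. -/
def HcondX {n : ℕ} (p : (Fin n → α) → (Fin n → β) → ℝ) (d : ℕ) (i : Fin n) : ℝ :=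
  -(∑ x, ∑ y, p x y * Real.logb 2 (condX p d i x y))

/-- Conditional entropy `H(Y_i | Y^{i-1}, X^{i-d})` in bits. -/
def HcondY {n : ℕ} (p : (Fin n → α) → (Fin n → β) → ℝ) (d : ℕ) (i : Fin n) : ℝ :=
  -(∑ x, ∑ y, p x y * Real.logb 2 (condY p d i x y))

/-- Causally conditional entropy `H(X^n || Y^{n-d}) = Σᵢ H(Xᵢ | X^{i-1}, Y^{i-d})`. -/
def HccX {n : ℕ} (p : (Fin n → α) → (Fin n → β) → ℝ) (d : ℕ) : ℝ := ∑ i, HcondX p d i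

/-- Causally conditional entropy `H(Y^n || X^{n-d})`. -/
def HccY {n : ℕ} (p : (Fin n → α) → (Fin n → β) → ℝ) (d : ℕ) : ℝ := ∑ i, HcondY p d i

/-- Conditional mutual information `I(Y^i; X_i | X^{i-1})`
(as the expectation of `log (p(xᵢ|x^{i-1},y^i) / p(xᵢ|x^{i-1}))`;
note `condX p n` is `p(xᵢ|x^{i-1})`, conditioning on no `y`'s at all). -/
def cmiYX {n : ℕ} (p : (Fin n → α) → (Fin n → β) → ℝ) (i : Fin n) : ℝ :=
  ∑ x, ∑ y, p x y * Real.logb 2 (condX p 0 i x y / condX p n i x y)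

/-- Conditional mutual information `I(X^i; Y_i | Y^{i-1})`. -/
def cmiXY {n : ℕ} (p : (Fin n → α) → (Fin n → β) → ℝ) (i : Fin n) : ℝ :=
  ∑ x, ∑ y, p x y * Real.logb 2 (condY p 0 i x y / condY p n i x y)

/-- Directed information `I(Y^n → X^n) = Σᵢ I(Y^i; X_i | X^{i-1})`. -/
def dirYX {n : ℕ} (p : (Fin n → α) → (Fin n → β) → ℝ) : ℝ := ∑ i, cmiYX p i

/-- Directed information `I(X^n → Y^n) = Σᵢ I(X^i; Y_i | Y^{i-1})`. -/
def dirXY {n : ℕ} (p : (Fin n → α) → (Fin n → β) → ℝ) : ℝ := ∑ i, cmiXY p i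

/-- Directed information `I(Y^{n-1} → X^n) = Σᵢ I(Y^{i-1}; X_i | X^{i-1})`
(the term for `i = 1` vanishes, so we may sum over all `i`). -/
def dirY1X {n : ℕ} (p : (Fin n → α) → (Fin n → β) → ℝ) : ℝ :=
  ∑ i, ∑ x, ∑ y, p x y * Real.logb 2 (condX p 1 i x y / condX p n i x y)

/-- Mutual information `I(X^n; Y^n)` in bits. -/
def miXY {n : ℕ} (p : (Fin n → α) → (Fin n → β) → ℝ) : ℝ :=
  ∑ x, ∑ y, p x y * Real.logb 2 (p x y / (pX p x * pY p y))

/-- An instantaneous lossless source encoder with causal side information: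
`M i x y` is the binary codeword emitted at time `i`; it depends only on
`(x^i, y^i)`, and for every fixed history `(x^{i-1}, y^i)` the map
`x_i ↦ M i (x^{i-1} x_i) y` is prefix-free (in particular injective). -/
def IsCausalEncoder {n : ℕ}
    (M : Fin n → (Fin n → α) → (Fin n → β) → List Bool) : Prop :=
  (∀ i x x' y y', (∀ j, j ≤ i → x j = x' j) → (∀ j, j ≤ i → y j = y' j) →
    M i x y = M i x' y') ∧
  (∀ i x x' y, (∀ j, j < i → x j = x' j) → x i ≠ x' i →
    ¬ (M i x y <+: M i x' y))

/-- `L(x^n||y^n)`: total length of the concatenation `M₁(x₁,y₁) ⋯ Mₙ(xⁿ,yⁿ)`. -/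
def codeLen {n : ℕ} (M : Fin n → (Fin n → α) → (Fin n → β) → List Bool)
    (x : Fin n → α) (y : Fin n → β) : ℝ :=
  ∑ i, ((M i x y).length : ℝ)

/-!
At time `i`, encode `xᵢ` with a prefix code for the conditional pmf `q = p(· | x^{i-1}, y^i)` whose
codeword for every `s` with `q s > 0` has length at most `1 - log₂ q s`; taking expectations, the
`i`-th codeword has expected length at most `1 + H(Xᵢ | X^{i-1}, Y^i)`. Such a code exists by Kraft's
theorem, proved greedily: a word of the largest length that is prefix-incomparable with all shorter
codewords exists by counting. Symbols with `q s = 0` must receive codewords too, since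
prefix-freeness is required for every history.
-/

section Kraft

def wordsOfLength (L : ℕ) : Finset (List Bool) :=
  Finset.univ.image (List.Vector.toList : List.Vector Bool L → List Bool)

@[simp]
lemma mem_wordsOfLength {L : ℕ} {w : List Bool} : w ∈ wordsOfLength L ↔ w.length = L := by
  simp only [wordsOfLength, Finset.mem_image, Finset.mem_univ, true_and]
  exact ⟨fun ⟨v, hv⟩ => hv ▸ v.toList_length, fun h => ⟨⟨w, h⟩, rfl⟩⟩

lemma card_wordsOfLength (L : ℕ) : (wordsOfLength L).card = 2 ^ L := by
  rw [wordsOfLength, Finset.card_image_of_injective _ List.Vector.toList_injective,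
    Finset.card_univ, card_vector, Fintype.card_bool]

lemma card_wordsOfLength_filter_prefix_le (w : List Bool) (L : ℕ) :
    ((wordsOfLength L).filter (w <+: ·)).card ≤ 2 ^ (L - w.length) := by
  calc ((wordsOfLength L).filter (w <+: ·)).card
      ≤ ((wordsOfLength (L - w.length)).image (w ++ ·)).card := by
        refine Finset.card_le_card fun v hv => ?_
        obtain ⟨hvL, hwv⟩ := Finset.mem_filter.mp hv
        rw [mem_wordsOfLength] at hvL
        exact Finset.mem_image.mpr ⟨v.drop w.length, by simp [hvL],
          List.prefix_iff_eq_append.mp hwv⟩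
    _ ≤ 2 ^ (L - w.length) := Finset.card_image_le.trans (card_wordsOfLength _).le

lemma sum_two_pow_sub_lt {ι : Type*} (s : Finset ι) (l : ι → ℕ) (L : ℕ)
    (hl : ∀ b ∈ s, l b ≤ L) (h : ((2 : ℝ) ^ L)⁻¹ + ∑ b ∈ s, ((2 : ℝ) ^ l b)⁻¹ ≤ 1) :
    ∑ b ∈ s, 2 ^ (L - l b) < 2 ^ L := by
  have h2L : (0 : ℝ) < 2 ^ L := by positivity
  suffices (∑ b ∈ s, 2 ^ (L - l b) : ℝ) < 2 ^ L by exact_mod_cast this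
  calc (∑ b ∈ s, 2 ^ (L - l b) : ℝ) = 2 ^ L * ∑ b ∈ s, ((2 : ℝ) ^ l b)⁻¹ := by
        rw [Finset.mul_sum]
        exact Finset.sum_congr rfl fun b hb => pow_sub₀ _ two_ne_zero (hl b hb)
    _ ≤ 2 ^ L * (1 - ((2 : ℝ) ^ L)⁻¹) := by gcongr; linarith
    _ < 2 ^ L := by rw [mul_sub, mul_inv_cancel₀ h2L.ne']; linarith

lemma exists_word_incomparable {ι : Type*} (s : Finset ι) (C : ι → List Bool) (L : ℕ)
    (hl : ∀ b ∈ s, (C b).length ≤ L)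
    (h : ((2 : ℝ) ^ L)⁻¹ + ∑ b ∈ s, ((2 : ℝ) ^ (C b).length)⁻¹ ≤ 1) :
    ∃ v : List Bool, v.length = L ∧ ∀ b ∈ s, ¬ C b <+: v ∧ ¬ v <+: C b := by
  let bad := s.biUnion fun b => (wordsOfLength L).filter (C b <+: ·)
  have hbad : bad.card < (wordsOfLength L).card := by
    calc bad.card ≤ ∑ b ∈ s, ((wordsOfLength L).filter (C b <+: ·)).card := Finset.card_biUnion_le
      _ ≤ ∑ b ∈ s, 2 ^ (L - (C b).length) :=
          Finset.sum_le_sum fun b _ => card_wordsOfLength_filter_prefix_le _ _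
      _ < 2 ^ L := sum_two_pow_sub_lt s _ L hl h
      _ = (wordsOfLength L).card := (card_wordsOfLength L).symm
  obtain ⟨v, hvL, hvbad⟩ := Finset.exists_mem_notMem_of_card_lt_card hbad
  rw [mem_wordsOfLength] at hvL
  have hext : ∀ b ∈ s, ¬ C b <+: v := fun b hb hbv =>
    hvbad (Finset.mem_biUnion.mpr ⟨b, hb, Finset.mem_filter.mpr ⟨mem_wordsOfLength.mpr hvL, hbv⟩⟩)
  refine ⟨v, hvL, fun b hb => ⟨hext b hb, fun hvb => hext b hb ?_⟩⟩
  rw [hvb.eq_of_length (le_antisymm hvb.length_le (hvL ▸ hl b hb))]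

theorem exists_prefixCode_of_kraft {ι : Type*} (l : ι → ℕ) (s : Finset ι)
    (h : ∑ a ∈ s, ((2 : ℝ) ^ l a)⁻¹ ≤ 1) :
    ∃ C : ι → List Bool, (∀ a ∈ s, (C a).length = l a) ∧
      (s : Set ι).Pairwise fun a b => ¬ C a <+: C b := by
  classical
  induction s using Finset.induction_on_max_value l with
  | empty => exact ⟨fun _ => [], by simp, by simp⟩
  | insert a s has hmax ih =>
    rw [Finset.sum_insert has] at h
    obtain ⟨C, hlen, hpf⟩ := ih (by linarith [show (0 : ℝ) ≤ ((2 : ℝ) ^ l a)⁻¹ by positivity])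
    obtain ⟨v, hvlen, hv⟩ := exists_word_incomparable s C (l a)
      (fun b hb => (hlen b hb).trans_le (hmax b hb))
      (by rwa [Finset.sum_congr rfl fun b hb => by rw [hlen b hb]])
    have hC : ∀ b ∈ s, Function.update C a v b = C b := fun b hb =>
      Function.update_of_ne (ne_of_mem_of_not_mem hb has) _ _
    refine ⟨Function.update C a v, fun b hb => ?_, ?_⟩
    · rcases Finset.mem_insert.mp hb with rfl | hb
      · simpa using hvlen
      · rw [hC b hb, hlen b hb]
    · rw [Finset.coe_insert, Set.pairwise_insert]
      refine ⟨fun b hb c hc hbc => ?_, fun b hb _ => ?_⟩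
      · simpa only [hC b hb, hC c hc] using hpf hb hc hbc
      · simpa only [hC b hb, Function.update_self] using (hv b hb).symm

end Kraft

section ShannonCode

/-- Unlike the Shannon length `⌈-log₂ t⌉`, this satisfies `2^{-ℓ} < t` strictly, which leaves room
in the Kraft sum for the symbols of probability zero. -/
def codeLength (t : ℝ) : ℕ := ⌊-logb 2 t⌋₊ + 1

lemma inv_two_pow_codeLength_lt {t : ℝ} (ht : 0 < t) : ((2 : ℝ) ^ codeLength t)⁻¹ < t := by
  have hlt : -logb 2 t < codeLength t := by
    rw [codeLength, Nat.cast_add_one]; exact Nat.lt_floor_add_one _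
  rw [← Real.rpow_natCast, ← Real.rpow_neg zero_le_two, ← Real.lt_logb_iff_rpow_lt one_lt_two ht]
  linarith

lemma codeLength_le {t : ℝ} (ht0 : 0 < t) (ht1 : t ≤ 1) : (codeLength t : ℝ) ≤ 1 - logb 2 t := by
  have hlog : 0 ≤ -logb 2 t := neg_nonneg.mpr (Real.logb_nonpos one_lt_two ht0.le ht1)
  rw [codeLength, Nat.cast_add_one]
  linarith [Nat.floor_le hlog]

def IsSubPmf {ι : Type*} [Fintype ι] (q : ι → ℝ) : Prop := (∀ a, 0 ≤ q a) ∧ ∑ a, q a ≤ 1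

lemma IsSubPmf.sum_inv_two_pow_codeLength_lt_one {ι : Type*} [Fintype ι] {q : ι → ℝ}
    (hq : IsSubPmf q) :
    ∑ a with 0 < q a, ((2 : ℝ) ^ codeLength (q a))⁻¹ < 1 := by
  rcases Finset.eq_empty_or_nonempty (Finset.univ.filter (0 < q ·)) with hP | hP
  · rw [hP, Finset.sum_empty]; exact one_pos
  calc ∑ a with 0 < q a, ((2 : ℝ) ^ codeLength (q a))⁻¹
      < ∑ a with 0 < q a, q a :=
        Finset.sum_lt_sum_of_nonempty hP fun a ha =>
          inv_two_pow_codeLength_lt (Finset.mem_filter.mp ha).2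
    _ ≤ ∑ a, q a := Finset.sum_le_sum_of_subset_of_nonneg (Finset.filter_subset _ _)
        fun a _ _ => hq.1 a
    _ ≤ 1 := hq.2

theorem IsSubPmf.exists_prefixCode {ι : Type*} [Fintype ι] {q : ι → ℝ}
    (hq : IsSubPmf q) :
    ∃ C : ι → List Bool, Pairwise (fun a b => ¬ C a <+: C b) ∧
      ∀ a, 0 < q a → ((C a).length : ℝ) ≤ 1 - logb 2 (q a) := by
  set T := ∑ a with 0 < q a, ((2 : ℝ) ^ codeLength (q a))⁻¹
  have hT : 0 < 1 - T := sub_pos.mpr hq.sum_inv_two_pow_codeLength_lt_one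
  -- the symbols of probability zero all get one length `K`, long enough to fit in the gap `1 - T`
  obtain ⟨K, hK⟩ := pow_unbounded_of_one_lt (Fintype.card ι / (1 - T)) one_lt_two
  have hzero : (Fintype.card ι : ℝ) * ((2 : ℝ) ^ K)⁻¹ ≤ 1 - T := by
    rw [div_lt_iff₀ hT] at hK
    rw [← div_eq_mul_inv, div_le_iff₀ (by positivity)]
    linarith
  let l a := if 0 < q a then codeLength (q a) else K
  have hkraft : ∑ a, ((2 : ℝ) ^ l a)⁻¹ ≤ 1 := by
    calc ∑ a, ((2 : ℝ) ^ l a)⁻¹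
        = T + ∑ a with ¬ 0 < q a, ((2 : ℝ) ^ K)⁻¹ := by
          simp only [l, apply_ite (fun k => ((2 : ℝ) ^ k)⁻¹), Finset.sum_ite]; rfl
      _ ≤ T + Fintype.card ι * ((2 : ℝ) ^ K)⁻¹ := by
          rw [Finset.sum_const, nsmul_eq_mul]
          gcongr
          exact_mod_cast Finset.card_le_univ _
      _ ≤ 1 := by linarith
  obtain ⟨C, hlen, hpf⟩ := exists_prefixCode_of_kraft l Finset.univ hkraft
  refine ⟨C, fun a b hab => hpf (Finset.mem_coe.mpr (Finset.mem_univ a))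
    (Finset.mem_coe.mpr (Finset.mem_univ b)) hab, fun a ha => ?_⟩
  have hq1 : q a ≤ 1 :=
    (Finset.single_le_sum (fun b _ => hq.1 b) (Finset.mem_univ a)).trans hq.2
  rw [hlen a (Finset.mem_univ a)]
  simpa only [l, if_pos ha] using codeLength_le ha hq1

end ShannonCode

section CausalEncoder

variable {α β : Type} [Fintype α] [Fintype β] {n : ℕ} {p : (Fin n → α) → (Fin n → β) → ℝ}

lemma pr_nonneg (hp : ∀ x y, 0 ≤ p x y) (E : (Fin n → α) → (Fin n → β) → Prop) :
    0 ≤ pr p E :=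
  Finset.sum_nonneg fun x _ => Finset.sum_nonneg fun y _ => by split_ifs <;> simp [hp]

lemma le_pr (hp : ∀ x y, 0 ≤ p x y) {E : (Fin n → α) → (Fin n → β) → Prop}
    {x : Fin n → α} {y : Fin n → β} (h : E x y) : p x y ≤ pr p E := by
  have hnn : ∀ x' y', 0 ≤ if E x' y' then p x' y' else 0 := fun x' y' => by
    split_ifs <;> simp [hp]
  calc p x y = if E x y then p x y else 0 := (if_pos h).symm
    _ ≤ ∑ y', if E x y' then p x y' else 0 :=
        Finset.single_le_sum (fun y' _ => hnn x y') (Finset.mem_univ y)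
    _ ≤ pr p E :=
        Finset.single_le_sum (f := fun x' => ∑ y', if E x' y' then p x' y' else 0)
          (fun x' _ => Finset.sum_nonneg fun y' _ => hnn x' y') (Finset.mem_univ x)

lemma sum_pr_fiberwise {γ : Type*} [Fintype γ] (g : (Fin n → α) → (Fin n → β) → γ)
    (E : (Fin n → α) → (Fin n → β) → Prop) :
    ∑ c, pr p (fun x y => g x y = c ∧ E x y) = pr p E := by
  unfold pr
  rw [Finset.sum_comm]
  refine Finset.sum_congr rfl fun x _ => ?_
  rw [Finset.sum_comm]
  refine Finset.sum_congr rfl fun y _ => ?_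
  dsimp only
  rw [Finset.sum_eq_single_of_mem (g x y) (Finset.mem_univ _) fun c _ hc => ?_]
  · simp
  exact if_neg fun h => hc h.1.symm

/-- The conditional pmf `s ↦ p(Xᵢ = s | x^{i-1}, y^i)`. -/
def condPmf (p : (Fin n → α) → (Fin n → β) → ℝ) (i : Fin n) (x : Fin n → α) (y : Fin n → β)
    (s : α) : ℝ :=
  pr p (fun x' y' => x' i = s ∧ (∀ j < i, x' j = x j) ∧ ∀ j ≤ i, y' j = y j) /
    pr p (fun x' y' => (∀ j < i, x' j = x j) ∧ ∀ j ≤ i, y' j = y j)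

lemma condX_zero_eq_condPmf (i : Fin n) (x : Fin n → α) (y : Fin n → β) :
    condX p 0 i x y = condPmf p i x y (x i) := by
  simp only [condX, condPmf, add_zero, Fin.val_fin_le, and_left_comm]

lemma condPmf_congr {i : Fin n} {x x' : Fin n → α} {y y' : Fin n → β}
    (hx : ∀ j < i, x j = x' j) (hy : ∀ j ≤ i, y j = y' j) :
    condPmf p i x y = condPmf p i x' y' := by
  have hxe : ∀ x'' : Fin n → α, (∀ j < i, x'' j = x j) ↔ ∀ j < i, x'' j = x' j :=
    fun x'' => forall₂_congr fun j hj => by rw [hx j hj]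
  have hye : ∀ y'' : Fin n → β, (∀ j ≤ i, y'' j = y j) ↔ ∀ j ≤ i, y'' j = y' j :=
    fun y'' => forall₂_congr fun j hj => by rw [hy j hj]
  funext s
  simp only [condPmf, hxe, hye]

lemma isSubPmf_condPmf (hp : ∀ x y, 0 ≤ p x y) (i : Fin n) (x : Fin n → α) (y : Fin n → β) :
    IsSubPmf (condPmf p i x y) := by
  refine ⟨fun s => div_nonneg (pr_nonneg hp _) (pr_nonneg hp _), ?_⟩
  simp only [condPmf, ← Finset.sum_div]
  rw [sum_pr_fiberwise (fun x' _ => x' i)]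
  exact div_self_le_one _

lemma condPmf_self_pos (hp : ∀ x y, 0 ≤ p x y) {i : Fin n} {x : Fin n → α} {y : Fin n → β}
    (hxy : 0 < p x y) : 0 < condPmf p i x y (x i) :=
  div_pos (hxy.trans_le (le_pr hp ⟨rfl, fun _ _ => rfl, fun _ _ => rfl⟩))
    (hxy.trans_le (le_pr hp ⟨fun _ _ => rfl, fun _ _ => rfl⟩))

theorem isCausalEncoder_code_condPmf (hp : ∀ x y, 0 ≤ p x y)
    (code : (q : α → ℝ) → IsSubPmf q → α → List Bool)
    (hcode : ∀ q hq, Pairwise fun a b => ¬ code q hq a <+: code q hq b) :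
    IsCausalEncoder fun i x y => code (condPmf p i x y) (isSubPmf_condPmf hp i x y) (x i) := by
  refine ⟨fun i x x' y y' hx hy => ?_, fun i x x' y hx hne => ?_⟩
  · simp only [condPmf_congr (p := p) (fun j hj => hx j hj.le) hy, hx i le_rfl]
  · simpa only [condPmf_congr (p := p) hx fun _ _ => rfl] using
      hcode _ (isSubPmf_condPmf hp i x' y) hne

lemma sum_mul_codeLen (M : Fin n → (Fin n → α) → (Fin n → β) → List Bool) :
    ∑ x, ∑ y, p x y * codeLen M x y = ∑ i, ∑ x, ∑ y, p x y * ((M i x y).length : ℝ) := by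
  simp only [codeLen, Finset.mul_sum]
  exact (Finset.sum_congr rfl fun x _ => Finset.sum_comm).trans Finset.sum_comm

lemma one_add_HcondX (hp : IsPmf p) (d : ℕ) (i : Fin n) :
    1 + HcondX p d i = ∑ x, ∑ y, p x y * (1 - logb 2 (condX p d i x y)) := by
  simp only [HcondX, mul_sub, mul_one, Finset.sum_sub_distrib, hp.2]
  ring

theorem sum_mul_codeLen_le (hp : IsPmf p) (d : ℕ)
    (M : Fin n → (Fin n → α) → (Fin n → β) → List Bool)
    (hM : ∀ i x y, 0 < p x y → ((M i x y).length : ℝ) ≤ 1 - logb 2 (condX p d i x y)) :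
    ∑ x, ∑ y, p x y * codeLen M x y ≤ ∑ i, (1 + HcondX p d i) := by
  simp only [sum_mul_codeLen, one_add_HcondX hp]
  gcongr ∑ i, ∑ x, ∑ y, ?_ with i _ x _ y _
  rcases (hp.1 x y).eq_or_lt with hxy | hxy
  · simp [← hxy]
  · exact mul_le_mul_of_nonneg_left (hM i x y hxy) hxy.le

end CausalEncoder

/-- achievability for instantaneous lossless compression with causal
side information: there is an encoder with
`(1/n) E[L(X^n||Y^n)] ≤ (1/n) Σᵢ (1 + H(Xᵢ | X^{i-1}, Y^i))`. -/
theorem lossless_causal_coding_achievability {n : ℕ}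
    (p : (Fin n → α) → (Fin n → β) → ℝ) (hp : IsPmf p) :
    ∃ M : Fin n → (Fin n → α) → (Fin n → β) → List Bool,
      IsCausalEncoder M ∧
      (n : ℝ)⁻¹ * (∑ x, ∑ y, p x y * codeLen M x y) ≤
        (n : ℝ)⁻¹ * ∑ i, (1 + HcondX p 0 i) := by
  choose code hcode_prefix hcode_len using fun (q : α → ℝ) (hq : IsSubPmf q) =>
    hq.exists_prefixCode
  refine ⟨_, isCausalEncoder_code_condPmf hp.1 code hcode_prefix, ?_⟩
  gcongr
  refine sum_mul_codeLen_le hp 0 _ fun i x y hxy => ?_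
  rw [condX_zero_eq_condPmf]
  exact hcode_len _ _ _ (condPmf_self_pos hp.1 hxy)
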